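/- arXiv:1403.0483 — 4 statements merged into one kernel-verified Lean document; each statement's English description precedes it below -/
import Mathlib

section
/- For nonnegative integers $i \le n$, $\sum_{k=0}^{n} \frac{(-n)_k}{k!} \binom{n-i+k}{k} \frac{1}{n-i+k+1} = (-1)^{n+i} \frac{n!\,(n-i)!}{(2n-i+1)!}$. -/
open Finset

/-- Pochhammer symbol `(x)_k = x (x+1) ⋯ (x+k-1)`. -/
noncomputable def poch (x : ℝ) (k : ℕ) : ℝ := (ascPochhammer ℝ k).eval x

/-!
With `m = n - i`, the polynomial `p(y) = (1 - y)_m` has degree `m ≤ n`, value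
`m! * C(m + k, k)` at `y = -k` and value `(-1)^m * m!` at `y = m + 1`. The barycentric Lagrange
formula at the nodes `0, -1, …, -n`, whose nodal polynomial is `(x)_{n+1}` and whose weights are
`(-1)^k * C(n, k) / n!`, writes `p(m + 1)` as `(m + 1)_{n+1} * m! / n!` times the sum in question.
-/

open Polynomial
open scoped Nat

theorem ascPochhammer_eval_eq_prod_range {R : Type*} [CommSemiring R] (n : ℕ) (r : R) :
    (ascPochhammer R n).eval r = ∏ j ∈ range n, (r + j) := by
  induction n with
  | zero => simp
  | succ n ih => simp [ascPochhammer_succ_right, ih, ← Finset.prod_range_succ]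

theorem ascPochhammer_eval_neg_natCast {R : Type*} [CommRing R] (n k : ℕ) :
    (ascPochhammer R k).eval (-(n : R)) = (-1) ^ k * n.descFactorial k := by
  rw [ascPochhammer_eval_neg_eq_descPochhammer, descPochhammer_eval_eq_descFactorial]

theorem ascPochhammer_eval_natCast_add_one {R : Type*} [Semiring R] (n k : ℕ) :
    (ascPochhammer R k).eval ((n : R) + 1) = k ! * (k + n).choose n := by
  rw [← Nat.cast_add_one, ascPochhammer_nat_eq_natCast_ascFactorial,
    Nat.ascFactorial_eq_factorial_mul_choose, add_comm n k, ← Nat.choose_symm_add]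
  push_cast; rfl

namespace Lagrange

variable {F ι : Type*} [Field F] [DecidableEq ι] {s : Finset ι} {v : ι → F}

theorem eval_eq_eval_nodal_mul_sum {f : F[X]} (hvs : Set.InjOn v s) (hf : f.degree < #s)
    {x : F} (hx : ∀ i ∈ s, x ≠ v i) :
    f.eval x
      = (nodal s v).eval x * ∑ i ∈ s, nodalWeight s v i * (x - v i)⁻¹ * f.eval (v i) := by
  conv_lhs => rw [eq_interpolate hvs hf]
  exact eval_interpolate_not_at_node _ hx

end Lagrange

section NegNatNodes

open Lagrange

theorem eval_nodal_range_neg {R : Type*} [CommRing R] (n : ℕ) (x : R) :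
    (nodal (range n) (fun k : ℕ => -(k : R))).eval x = (ascPochhammer R n).eval x := by
  simp [eval_nodal, ascPochhammer_eval_eq_prod_range]

variable {F : Type*} [Field F] [CharZero F]

theorem nodalWeight_range_neg {n k : ℕ} (hk : k ≤ n) :
    nodalWeight (range (n + 1)) (fun j : ℕ => -(j : F)) k = (-1) ^ k * n.choose k / n ! := by
  have hsplit : (range (n + 1)).erase k = range k ∪ Ico (k + 1) (n + 1) := by
    ext j
    simp only [mem_erase, mem_range, mem_union, mem_Ico]
    omega
  have hdisj : Disjoint (range k) (Ico (k + 1) (n + 1)) := by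
    simp only [disjoint_left, mem_range, mem_Ico]
    omega
  have hbelow : ∏ j ∈ range k, (-(k : F) - -(j : F)) = (-1) ^ k * k ! := by
    simp only [sub_neg_eq_add, ← ascPochhammer_eval_eq_prod_range, ascPochhammer_eval_neg_natCast,
      Nat.descFactorial_self]
  have habove : ∏ j ∈ Ico (k + 1) (n + 1), (-(k : F) - -(j : F)) = (n - k)! := by
    rw [prod_Ico_eq_prod_range, Nat.add_sub_add_right, ← ascPochhammer_eval_one,
      ascPochhammer_eval_eq_prod_range]
    refine prod_congr rfl fun t _ => ?_
    push_cast; ring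
  rw [nodalWeight, prod_inv_distrib, hsplit, prod_union hdisj, hbelow, habove,
    Nat.cast_choose F hk]
  have := (Nat.cast_ne_zero (R := F)).mpr k.factorial_ne_zero
  have := (Nat.cast_ne_zero (R := F)).mpr (n - k).factorial_ne_zero
  have := (Nat.cast_ne_zero (R := F)).mpr n.factorial_ne_zero
  field_simp
  rw [← pow_mul, pow_mul', neg_one_sq, one_pow]

theorem sum_neg_one_pow_mul_choose_mul_eval_div {p : F[X]} {n : ℕ} (hp : p.natDegree ≤ n)
    {x : F} (hx : ∀ k ≤ n, x + k ≠ 0) :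
    ∑ k ∈ range (n + 1), (-1) ^ k * n.choose k * p.eval (-(k : F)) / (x + k)
      = n ! * p.eval x / (ascPochhammer F (n + 1)).eval x := by
  have hinj : Set.InjOn (fun k : ℕ => -(k : F)) (range (n + 1)) :=
    fun a _ b _ hab => Nat.cast_injective (neg_injective hab)
  have hdeg : p.degree < #(range (n + 1)) := by
    rw [card_range]
    exact degree_le_natDegree.trans_lt (by exact_mod_cast Nat.lt_succ_of_le hp)
  have hnode : ∀ k ∈ range (n + 1), x ≠ -(k : F) := fun k hk =>
    fun h => hx k (Nat.lt_succ_iff.mp (mem_range.mp hk)) (by rw [h, neg_add_cancel])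
  have hA : (ascPochhammer F (n + 1)).eval x ≠ 0 := by
    rw [ascPochhammer_eval_eq_prod_range, prod_ne_zero_iff]
    exact fun k hk => hx k (Nat.lt_succ_iff.mp (mem_range.mp hk))
  rw [Lagrange.eval_eq_eval_nodal_mul_sum hinj hdeg hnode, eval_nodal_range_neg, mul_left_comm,
    mul_div_cancel_left₀ _ hA, mul_sum]
  refine sum_congr rfl fun k hk => ?_
  rw [nodalWeight_range_neg (Nat.lt_succ_iff.mp (mem_range.mp hk)), sub_neg_eq_add]
  have := (Nat.cast_ne_zero (R := F)).mpr n.factorial_ne_zero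
  field_simp

end NegNatNodes

theorem sum_neg_one_pow_mul_choose_mul_choose_div {F : Type*} [Field F] [CharZero F] {m n : ℕ}
    (hmn : m ≤ n) :
    ∑ k ∈ range (n + 1), (-1) ^ k * n.choose k * (m + k).choose k / ((m : F) + k + 1)
      = (-1) ^ m * n ! * m ! / (n + m + 1)! := by
  set p : F[X] := (ascPochhammer F m).comp (1 - X)
  have hp : p.natDegree ≤ n := by
    have : (1 - X : F[X]).natDegree ≤ 1 := by compute_degree
    calc p.natDegree ≤ m * 1 := by
          rw [← ascPochhammer_natDegree m (S := F)]
          exact natDegree_comp_le.trans (Nat.mul_le_mul_left _ this)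
      _ ≤ n := by rwa [mul_one]
  have hp_node : ∀ k : ℕ, p.eval (-(k : F)) = m ! * (m + k).choose k := fun k => by
    rw [eval_comp, eval_sub, eval_one, eval_X, sub_neg_eq_add, add_comm,
      ascPochhammer_eval_natCast_add_one]
  have hp_x : p.eval ((m : F) + 1) = (-1) ^ m * m ! := by
    rw [eval_comp, eval_sub, eval_one, eval_X, sub_add_cancel_right,
      ascPochhammer_eval_neg_natCast, Nat.descFactorial_self]
  have hm : (m ! : F) ≠ 0 := Nat.cast_ne_zero.mpr m.factorial_ne_zero
  have hA : (ascPochhammer F (n + 1)).eval ((m : F) + 1) = (n + m + 1)! / m ! := by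
    rw [eq_div_iff hm, mul_comm, factorial_mul_ascPochhammer, add_comm m, add_right_comm]
  have h := sum_neg_one_pow_mul_choose_mul_eval_div hp (x := (m : F) + 1) (fun k _ => by
    rw [add_right_comm]; exact_mod_cast (m + k).succ_ne_zero)
  simp only [hp_node, hp_x, hA] at h
  calc _ = (∑ k ∈ range (n + 1), (-1) ^ k * n.choose k * (m ! * (m + k).choose k)
          / ((m : F) + 1 + k)) / m ! := by
        rw [sum_div]
        refine sum_congr rfl fun k _ => ?_
        rw [add_right_comm]
        field_simp
    _ = _ := by
        rw [h]
        field_simp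

theorem stmt_1 (n i : ℕ) (hi : i ≤ n) :
    ∑ k ∈ Finset.range (n + 1),
      poch (-(n : ℝ)) k / (k.factorial : ℝ) * ((n - i + k).choose k : ℝ)
        * (1 / ((n : ℝ) - i + k + 1))
    = (-1) ^ (n + i) * (n.factorial : ℝ) * ((n - i).factorial : ℝ)
        / ((2 * n - i + 1).factorial : ℝ) := by
  set m := n - i with hm
  have hcast : (n : ℝ) - i = m := by rw [hm, Nat.cast_sub hi]
  have hterm : ∀ k : ℕ,
      poch (-(n : ℝ)) k / k ! * ((m + k).choose k : ℝ) * (1 / ((m : ℝ) + k + 1))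
      = (-1) ^ k * n.choose k * (m + k).choose k / ((m : ℝ) + k + 1) := fun k => by
    have := (Nat.cast_ne_zero (R := ℝ)).mpr k.factorial_ne_zero
    rw [poch, ascPochhammer_eval_neg_natCast, Nat.descFactorial_eq_factorial_mul_choose]
    push_cast
    field_simp
  have hsign : (-1 : ℝ) ^ (n + i) = (-1) ^ m := by
    rw [show n + i = m + 2 * i by omega, pow_add, pow_mul, neg_one_sq, one_pow, mul_one]
  rw [hcast, sum_congr rfl fun k _ => hterm k,
    sum_neg_one_pow_mul_choose_mul_choose_div (Nat.sub_le n i),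
    show 2 * n - i + 1 = n + m + 1 by omega, hsign]
end

section
/- For nonnegative integers $r \le i+l$ with $l \ge -1$ and $i+l < n$, one has $\sum_{k=0}^{n} \frac{(-n)_k (n-i+1)_k}{(1)_k (l+2)_k}\, k(k-1)\cdots(k-r+1) = 0$. -/
open Finset Polynomial

theorem Polynomial.sum_range_neg_one_pow_mul_choose_mul_eval_eq_zero {R : Type*} [CommRing R]
    {P : R[X]} {n : ℕ} (hP : P.natDegree < n) :
    ∑ k ∈ range (n + 1), (-1) ^ k * n.choose k * P.eval (k : R) = 0 := by
  have h := congr_fun (fwdDiff_iter_eq_zero_of_degree_lt hP) 0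
  rw [fwdDiff_iter_eq_sum_shift] at h
  calc _ = (-1) ^ n * ∑ k ∈ range (n + 1), ((-1 : ℤ) ^ (n - k) * n.choose k) • P.eval (k : R) := by
        rw [mul_sum]
        refine sum_congr rfl fun k hk => ?_
        obtain ⟨j, rfl⟩ := Nat.exists_eq_add_of_le (mem_range_succ_iff.mp hk)
        have hj : ((-1 : R) ^ j) ^ 2 = 1 := by rw [← pow_mul, pow_mul', neg_one_sq, one_pow]
        simp only [zsmul_eq_mul, Int.cast_mul, Int.cast_pow, Int.cast_neg, Int.cast_one,
          Int.cast_natCast, Nat.add_sub_cancel_left, pow_add]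
        linear_combination (-(-1) ^ k * ((k + j).choose k : R) * P.eval (k : R)) * hj
    _ = 0 := by simpa using h

theorem poch_pos {x : ℝ} (hx : 0 < x) (k : ℕ) : 0 < poch x k := ascPochhammer_pos k x hx

theorem poch_add (x : ℝ) (m n : ℕ) : poch x (m + n) = poch x m * poch (x + m) n := by
  simpa [poch, eval_comp] using (congrArg (eval x) (ascPochhammer_mul ℝ m n)).symm

theorem poch_neg_natCast_div_poch_one (n k : ℕ) :
    poch (-(n : ℝ)) k / poch 1 k = (-1) ^ k * n.choose k := by
  have hk : (k.factorial : ℝ) ≠ 0 := by positivity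
  rw [poch, poch, ascPochhammer_eval_neg_eq_descPochhammer, descPochhammer_eval_eq_descFactorial,
    ascPochhammer_eval_one, Nat.descFactorial_eq_factorial_mul_choose]
  field_simp
  push_cast
  ring

theorem poch_add_natCast_div_poch {x : ℝ} (hx : 0 < x) (d k : ℕ) :
    poch (x + d) k / poch x k = poch (x + k) d / poch x d := by
  rw [div_eq_div_iff (poch_pos hx k).ne' (poch_pos hx d).ne', mul_comm, ← poch_add,
    add_comm d k, poch_add, mul_comm]

theorem sum_poch_ratio_mul_descPochhammer_eq_zero {x : ℝ} (hx : 0 < x) {n d r : ℕ}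
    (h : d + r < n) :
    ∑ k ∈ range (n + 1), poch (-(n : ℝ)) k * poch (x + d) k / (poch 1 k * poch x k) *
      (descPochhammer ℝ r).eval (k : ℝ) = 0 := by
  set P : ℝ[X] := (ascPochhammer ℝ d).comp (X + C x) * descPochhammer ℝ r
  have hP : P.natDegree = d + r := by
    rw [natDegree_mul, natDegree_comp, ascPochhammer_natDegree, natDegree_X_add_C,
      descPochhammer_natDegree, mul_one]
    · exact ((monic_ascPochhammer ℝ d).comp_X_add_C x).ne_zero
    · exact (monic_descPochhammer ℝ r).ne_zero
  have hterm : ∀ k : ℕ, poch (-(n : ℝ)) k * poch (x + d) k / (poch 1 k * poch x k) *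
      (descPochhammer ℝ r).eval (k : ℝ) = (-1) ^ k * n.choose k * P.eval (k : ℝ) / poch x d := by
    intro k
    rw [mul_div_mul_comm, poch_neg_natCast_div_poch_one, poch_add_natCast_div_poch hx]
    simp only [P, eval_mul, eval_comp, eval_add, eval_C, eval_X, poch, add_comm (k : ℝ) x]
    ring
  simp_rw [hterm, ← sum_div, sum_range_neg_one_pow_mul_choose_mul_eval_eq_zero (hP ▸ h), zero_div]

theorem stmt_3 (n i r : ℕ) (l : ℤ) (hl : -1 ≤ l) (hr : (r : ℤ) ≤ (i : ℤ) + l)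
    (hn : (i : ℤ) + l < n) :
    ∑ k ∈ Finset.range (n + 1),
      poch (-(n : ℝ)) k * poch ((n : ℝ) - i + 1) k /
        (poch 1 k * poch ((l : ℝ) + 2) k) *
        (∏ m ∈ Finset.range r, ((k : ℝ) - m)) = 0 := by
  obtain ⟨d, hd⟩ : ∃ d : ℕ, (d : ℤ) = n - i - l - 1 := ⟨_, Int.toNat_of_nonneg (by omega)⟩
  have hx : (0 : ℝ) < l + 2 := by exact_mod_cast (by omega : (0 : ℤ) < l + 2)
  have hxd : (n : ℝ) - i + 1 = l + 2 + d := by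
    rw [show (d : ℝ) = n - i - l - 1 by exact_mod_cast hd]
    ring
  simp_rw [hxd, ← descPochhammer_eval_eq_prod_range]
  exact sum_poch_ratio_mul_descPochhammer_eq_zero hx (by omega)
end

section
/- For an odd positive integer $i \le n$ and a nonnegative integer $s$ with $s > n$ and $s \equiv n-i+1 \pmod 2$, $\int_0^1 h^n_{n-i}(t)\, \frac{t^s}{s!}\, dt = \frac{\sqrt{2n-2i+1}}{(s-n+i)!\,(s+1)_{n+1}} \prod_{m=0}^{(i-1)/2}(n-s-2m) \prod_{m=0}^{(i-3)/2}(n+s-2m)$, where $h^n_{n-i}(t) = \sum_{k=0}^n d^i_{n,k} t^k$ with $d^i_{n,k} = (-1)^n \frac{\sqrt{2n-2i+1}}{(-n)_i} \frac{(-n)_k (n-i+1)_k}{(k!)^2} \prod_{m=0}^{(i-1)/2}(n+k+1-2m) \prod_{m=0}^{(i-3)/2}(n-k-1-2m)$. -/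
open Finset

/-- The coefficient `d^i_{n,k}` (for odd `i`): the product
`∏_{m=0}^{(i-1)/2}` has `(i+1)/2` factors and `∏_{m=0}^{(i-3)/2}` has `(i-1)/2` factors. -/
noncomputable def d (n i k : ℕ) : ℝ :=
  (-1) ^ n * Real.sqrt (2 * (n : ℝ) - 2 * i + 1) / poch (-(n : ℝ)) i *
    (poch (-(n : ℝ)) k * poch ((n : ℝ) - i + 1) k / ((k.factorial : ℝ)) ^ 2) *
    (∏ m ∈ Finset.range ((i + 1) / 2), ((n : ℝ) + k + 1 - 2 * m)) *
    (∏ m ∈ Finset.range ((i - 1) / 2), ((n : ℝ) - k - 1 - 2 * m))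

/-- The wavelet polynomial `h^n_{n-i}(t) = ∑_{k=0}^n d^i_{n,k} t^k` on `[0,1)`. -/
noncomputable def h (n i : ℕ) (t : ℝ) : ℝ := ∑ k ∈ Finset.range (n + 1), d n i k * t ^ k

/-!
Integrating termwise turns the moment into `∑ₖ d^i_{n,k} / ((k + s + 1) s!)`, a sum of partial
fractions in `s` with poles at the nodes `-1, …, -(n + 1)`. Up to the factor `√(2n - 2i + 1)`,
`d^i_{n,k}` is the Lagrange nodal weight of the node `-(k + 1)` times the value there of
`R(X) = X (X - 1) ⋯ (X - n + i + 1) ∏ₘ (n - 2m - X) ∏ₘ (n - 2m + X)`; the two products are those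
of `d^i_{n,k}` with `k` replaced by `-(X + 1)`. Since `deg R ≤ n`, the barycentric form of Lagrange
interpolation sums the partial fractions to `R(s) / (s + 1)_{n+1}`, and
`s (s - 1) ⋯ (s - n + i + 1) = s! / (s - n + i)!`.
-/

open Polynomial Nat

theorem Lagrange.sum_nodalWeight_mul_inv_sub_mul_eval {F ι : Type*} [Field F] [DecidableEq ι]
    {s : Finset ι} {v : ι → F} {f : F[X]} {x : F} (hvs : Set.InjOn v s) (hf : f.degree < #s)
    (hx : ∀ i ∈ s, x ≠ v i) :
    ∑ i ∈ s, nodalWeight s v i * (x - v i)⁻¹ * f.eval (v i) = f.eval x / (nodal s v).eval x := by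
  rw [eq_div_iff (eval_nodal_not_at_node hx), mul_comm]
  conv_rhs => rw [Lagrange.eq_interpolate hvs hf]
  exact (Lagrange.eval_interpolate_not_at_node _ hx).symm

theorem integral_sum_mul_pow (S : Finset ℕ) (c : ℕ → ℝ) (s : ℕ) :
    ∫ t in (0:ℝ)..1, (∑ k ∈ S, c k * t ^ k) * t ^ s = ∑ k ∈ S, c k / (k + s + 1) := by
  simp_rw [sum_mul, mul_assoc, ← pow_add]
  rw [intervalIntegral.integral_finsetSum fun k _ =>
    (by fun_prop : Continuous _).intervalIntegrable _ _]
  refine sum_congr rfl fun k _ => ?_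
  rw [intervalIntegral.integral_const_mul, integral_pow]
  push_cast
  simp [div_eq_mul_inv]

lemma poch_eq_prod_range (x : ℝ) (k : ℕ) : poch x k = ∏ r ∈ range k, (x + r) := by
  induction k with
  | zero => simp [poch]
  | succ k ih => rw [poch, ascPochhammer_succ_eval, ← poch, ih, prod_range_succ]

lemma poch_natCast_add_one_mul_factorial (a k : ℕ) : poch (a + 1) k * a ! = (a + k)! := by
  rw [poch, ← Nat.cast_add_one, ← cast_ascFactorial, ← Nat.cast_mul, mul_comm,
    factorial_mul_ascFactorial]

lemma poch_neg_natCast_mul_factorial {n k : ℕ} (hk : k ≤ n) :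
    poch (-n) k * (n - k)! = (-1) ^ k * n ! := by
  rw [poch, ascPochhammer_eval_neg_eq_descPochhammer, descPochhammer_eval_eq_descFactorial,
    mul_assoc, ← Nat.cast_mul, mul_comm (n.descFactorial k), factorial_mul_descFactorial hk]

lemma prod_erase_range_natCast_sub {n k : ℕ} (hk : k ≤ n) :
    ∏ j ∈ (range (n + 1)).erase k, ((j : ℝ) - k) = (-1) ^ k * k ! * (n - k)! := by
  have hsplit : (range (n + 1)).erase k = range k ∪ Ico (k + 1) (n + 1) := by
    ext j; simp only [mem_erase, mem_range, mem_union, mem_Ico]; omega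
  have hdisj : Disjoint (range k) (Ico (k + 1) (n + 1)) := by
    simp only [disjoint_left, mem_range, mem_Ico]; omega
  have hlow : ∏ j ∈ range k, ((j : ℝ) - k) = (-1) ^ k * k ! := by
    rw [← poch_neg_natCast_mul_factorial le_rfl, poch_eq_prod_range, Nat.sub_self,
      factorial_zero, Nat.cast_one, mul_one]
    exact prod_congr rfl fun j _ => by ring
  have hhigh : ∏ j ∈ Ico (k + 1) (n + 1), ((j : ℝ) - k) = (n - k)! := by
    rw [prod_Ico_eq_prod_range, show n + 1 - (k + 1) = n - k by omega,
      ← prod_range_add_one_eq_factorial, Nat.cast_prod]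
    exact prod_congr rfl fun j _ => by push_cast; ring
  rw [hsplit, prod_union hdisj, hlow, hhigh]

namespace Alpert

noncomputable def node (k : ℕ) : ℝ := -(k + 1)

lemma node_injective : Function.Injective node := fun a b hab => by
  simpa [node] using hab

lemma nodalWeight_node {n k : ℕ} (hk : k ≤ n) :
    Lagrange.nodalWeight (range (n + 1)) node k = ((-1) ^ k * k ! * (n - k)! : ℝ)⁻¹ := by
  rw [Lagrange.nodalWeight, prod_inv_distrib, ← prod_erase_range_natCast_sub hk]
  exact congrArg _ (prod_congr rfl fun j _ => by rw [node, node]; ring)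

lemma eval_nodal_node (n : ℕ) (x : ℝ) :
    (Lagrange.nodal (range (n + 1)) node).eval x = poch (x + 1) (n + 1) := by
  rw [Lagrange.eval_nodal, poch_eq_prod_range]
  exact prod_congr rfl fun j _ => by rw [node]; ring

noncomputable def momentNumerator (n i : ℕ) : ℝ[X] :=
  descPochhammer ℝ (n - i) * (∏ m ∈ range ((i + 1) / 2), (C ((n : ℝ) - 2 * m) - X)) *
    ∏ m ∈ range ((i - 1) / 2), (C ((n : ℝ) - 2 * m) + X)

lemma natDegree_momentNumerator_le {n i : ℕ} (hin : i ≤ n) :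
    (momentNumerator n i).natDegree ≤ n := by
  have hprod_linear : ∀ (K : ℕ) (f : ℕ → ℝ[X]), (∀ m, (f m).natDegree ≤ 1) →
      (∏ m ∈ range K, f m).natDegree ≤ K := fun K f hf =>
    (natDegree_prod_le _ _).trans ((sum_le_card_nsmul _ _ 1 fun m _ => hf m).trans (by simp))
  calc (momentNumerator n i).natDegree ≤ (n - i) + (i + 1) / 2 + (i - 1) / 2 :=
        natDegree_mul_le.trans <| _root_.add_le_add
          (natDegree_mul_le.trans <| _root_.add_le_add (descPochhammer_natDegree ℝ _).le
            (hprod_linear _ _ fun m => by compute_degree))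
          (hprod_linear _ _ fun m => by compute_degree)
    _ ≤ n := by omega

lemma eval_node_momentNumerator (n i k : ℕ) :
    (momentNumerator n i).eval (node k) = (-1) ^ (n - i) * poch (k + 1) (n - i) *
      (∏ m ∈ range ((i + 1) / 2), ((n : ℝ) + k + 1 - 2 * m)) *
      ∏ m ∈ range ((i - 1) / 2), ((n : ℝ) - k - 1 - 2 * m) := by
  simp only [momentNumerator, eval_mul, eval_prod, eval_sub, eval_add, eval_C, eval_X,
    descPochhammer_eval_eq_prod_range, poch_eq_prod_range, node]
  have hdesc : ∏ j ∈ range (n - i), (-((k : ℝ) + 1) - j) =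
      (-1) ^ (n - i) * ∏ j ∈ range (n - i), ((k : ℝ) + 1 + j) := by
    simpa only [card_range, neg_add'] using prod_neg (s := range (n - i)) fun j => (k : ℝ) + 1 + j
  have hP : ∏ m ∈ range ((i + 1) / 2), ((n : ℝ) - 2 * m - -((k : ℝ) + 1)) =
      ∏ m ∈ range ((i + 1) / 2), ((n : ℝ) + k + 1 - 2 * m) :=
    prod_congr rfl fun m _ => by ring
  have hQ : ∏ m ∈ range ((i - 1) / 2), ((n : ℝ) - 2 * m + -((k : ℝ) + 1)) =
      ∏ m ∈ range ((i - 1) / 2), ((n : ℝ) - k - 1 - 2 * m) :=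
    prod_congr rfl fun m _ => by ring
  rw [hdesc, hP, hQ]

lemma eval_natCast_momentNumerator (n i s : ℕ) :
    (momentNumerator n i).eval (s : ℝ) = s.descFactorial (n - i) *
      (∏ m ∈ range ((i + 1) / 2), ((n : ℝ) - s - 2 * m)) *
      ∏ m ∈ range ((i - 1) / 2), ((n : ℝ) + s - 2 * m) := by
  simp only [momentNumerator, eval_mul, eval_prod, eval_sub, eval_add, eval_C, eval_X,
    descPochhammer_eval_eq_descFactorial]
  congr 1
  · exact congrArg _ (prod_congr rfl fun m _ => by ring)
  · exact prod_congr rfl fun m _ => by ring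

lemma d_eq_nodalWeight_mul_eval {n i k : ℕ} (hin : i ≤ n) (hk : k ≤ n) :
    d n i k = √(2 * (n : ℝ) - 2 * i + 1) *
      (Lagrange.nodalWeight (range (n + 1)) node k * (momentNumerator n i).eval (node k)) := by
  have fact_ne : ∀ m : ℕ, (m ! : ℝ) ≠ 0 := fun m => by positivity
  have hA : poch (-n) i = (-1) ^ i * n ! / (n - i)! :=
    (eq_div_iff (fact_ne _)).mpr (poch_neg_natCast_mul_factorial hin)
  have hB : poch (-n) k = (-1) ^ k * n ! / (n - k)! :=
    (eq_div_iff (fact_ne _)).mpr (poch_neg_natCast_mul_factorial hk)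
  have hC : poch ((n : ℝ) - i + 1) k = (n - i + k)! / (n - i)! := by
    rw [eq_div_iff (fact_ne _), ← poch_natCast_add_one_mul_factorial, Nat.cast_sub hin]
  have hD : poch ((k : ℝ) + 1) (n - i) = (k + (n - i))! / k ! :=
    (eq_div_iff (fact_ne _)).mpr (poch_natCast_add_one_mul_factorial k (n - i))
  have hsign : ((-1 : ℝ)) ^ n = (-1) ^ (n - i) * (-1) ^ i := by
    rw [← pow_add, Nat.sub_add_cancel hin]
  rw [d, nodalWeight_node hk, eval_node_momentNumerator, hA, hB, hC, hD, hsign,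
    Nat.add_comm k]
  field_simp
  ring_nf
  rw [pow_mul', neg_one_sq, one_pow, mul_one]

end Alpert

open Alpert in
theorem stmt_10_general (n i s : ℕ) (hin : i ≤ n) (hs : n < s) :
    ∫ t in (0:ℝ)..1, h n i t * (t ^ s / (s.factorial : ℝ))
      = Real.sqrt (2 * (n : ℝ) - 2 * i + 1) /
          (((s - n + i).factorial : ℝ) * poch ((s : ℝ) + 1) (n + 1)) *
        (∏ m ∈ Finset.range ((i + 1) / 2), ((n : ℝ) - s - 2 * m)) *
        (∏ m ∈ Finset.range ((i - 1) / 2), ((n : ℝ) + s - 2 * m)) := by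
  have hnodes : Set.InjOn node (range (n + 1)) := node_injective.injOn
  have hdeg : (momentNumerator n i).degree < #(range (n + 1)) := by
    rw [card_range]
    exact (degree_le_of_natDegree_le (natDegree_momentNumerator_le hin)).trans_lt
      (by exact_mod_cast Nat.lt_succ_self n)
  have hpoles : ∀ k ∈ range (n + 1), (s : ℝ) ≠ node k := fun k _ => by
    rw [node]; linarith [(k.cast_nonneg : (0 : ℝ) ≤ k), (s.cast_nonneg : (0 : ℝ) ≤ s)]
  have hdesc : (s.descFactorial (n - i) : ℝ) = s ! / (s - n + i)! := by
    rw [eq_div_iff (by positivity), mul_comm, ← Nat.cast_mul,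
      show s - n + i = s - (n - i) by omega, factorial_mul_descFactorial (by omega)]
  have hpoch : poch ((s : ℝ) + 1) (n + 1) ≠ 0 := (ascPochhammer_pos _ _ (by positivity)).ne'
  calc ∫ t in (0:ℝ)..1, h n i t * (t ^ s / (s.factorial : ℝ))
      = (∑ k ∈ range (n + 1), d n i k / (k + s + 1)) / s ! := by
        simp_rw [h, mul_div_assoc']
        rw [intervalIntegral.integral_div, integral_sum_mul_pow]
    _ = √(2 * (n : ℝ) - 2 * i + 1) * (∑ k ∈ range (n + 1), Lagrange.nodalWeight (range (n + 1))
          node k * (s - node k)⁻¹ * (momentNumerator n i).eval (node k)) / s ! := by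
        rw [mul_sum]
        refine congrArg (· / _) (sum_congr rfl fun k hk => ?_)
        have hpole : (s : ℝ) - node k = k + s + 1 := by rw [node]; ring
        rw [d_eq_nodalWeight_mul_eval hin (mem_range_succ_iff.mp hk), hpole]
        ring
    _ = _ := by
        rw [Lagrange.sum_nodalWeight_mul_inv_sub_mul_eval hnodes hdeg hpoles,
          eval_natCast_momentNumerator, eval_nodal_node, hdesc]
        field_simp

theorem stmt_10 (n i s : ℕ) (hodd : Odd i) (hi : 0 < i) (hin : i ≤ n)
    (hs : n < s) (hpar : Odd (s + (n - i))) :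
    ∫ t in (0:ℝ)..1, h n i t * (t ^ s / (s.factorial : ℝ))
      = Real.sqrt (2 * (n : ℝ) - 2 * i + 1) /
          (((s - n + i).factorial : ℝ) * poch ((s : ℝ) + 1) (n + 1)) *
        (∏ m ∈ Finset.range ((i + 1) / 2), ((n : ℝ) - s - 2 * m)) *
        (∏ m ∈ Finset.range ((i - 1) / 2), ((n : ℝ) + s - 2 * m)) :=
  stmt_10_general n i s hin hs
end

section
/- For integers $0 \le i \le n$ and $s \ge 0$, $\sum_{k=0}^{n} \frac{(-n)_k (n-i+1)_k}{(k!)^2} \frac{1}{k+s+1} = (-1)^i \frac{(-n)_i\,(-s)_{n-i}}{(s+1)_{n+1}}$. -/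
open Finset

/-!
With `m = n - i` and `y = s + 1`, the summand is `(-1)^k C(n,k) P(k) / (m! (y + k))` for the
polynomial `P = (X + 1)_m` of degree `m ≤ n`. Dividing, `P = P(-y) + (X + y) Q` with `deg Q < n`;
the `n`-th forward difference kills `Q`, so the sum is `P(-y) / m!` times
`∑ (-1)^k C(n,k) / (y + k) = n! / (y)_{n+1}`, which is the `n`-th forward difference of `1/x`
at `y` up to the sign `(-1)^n`. Finally `P(-y) = (-s)_m` and `(-1)^i (-n)_i = n! / m!`.
-/

open Polynomial

open scoped fwdDiff

section CommRing

variable {R : Type*} [CommRing R]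

lemma fwdDiff_iter_one_eq_neg_one_pow_mul_sum (f : R → R) (n : ℕ) (y : R) :
    Δ_[1] ^[n] f y =
      (-1) ^ n * ∑ k ∈ range (n + 1), (-1) ^ k * (n.choose k : R) * f (y + k) := by
  rw [fwdDiff_iter_eq_sum_shift, mul_sum]
  refine sum_congr rfl fun k hk => ?_
  have hkn : k ≤ n := Nat.lt_succ_iff.mp (mem_range.mp hk)
  have hsign : (-1 : R) ^ (n - k) = (-1) ^ n * (-1) ^ k := by
    obtain ⟨j, rfl⟩ := Nat.exists_eq_add_of_le hkn
    rw [Nat.add_sub_cancel_left, pow_add, mul_comm ((-1 : R) ^ k), mul_assoc, ← mul_pow]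
    simp
  simp [hsign, mul_assoc]

lemma alternating_sum_choose_mul_eval_eq_zero {n : ℕ} {Q : R[X]} (hQ : Q.degree < n) :
    ∑ k ∈ range (n + 1), (-1) ^ k * (n.choose k : R) * Q.eval (k : R) = 0 := by
  rcases eq_or_ne Q 0 with rfl | hQ0
  · simp
  have h := congrFun (fwdDiff_iter_eq_zero_of_degree_lt ((natDegree_lt_iff_degree_lt hQ0).2 hQ)) 0
  rw [fwdDiff_iter_one_eq_neg_one_pow_mul_sum] at h
  simpa using h

lemma ascPochhammer_eval_ne_zero [IsDomain R] {n : ℕ} {y : R} (hy : ∀ k < n, y + k ≠ 0) :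
    (ascPochhammer R n).eval y ≠ 0 := by
  rw [Ne, ascPochhammer_eval_eq_zero_iff]
  rintro ⟨k, hk, hky⟩
  exact hy k hk (by rw [hky, add_neg_cancel])

end CommRing

section Field

variable {K : Type*} [Field K]

lemma fwdDiff_iter_inv (n : ℕ) {y : K} (hy : ∀ k ≤ n, y + k ≠ 0) :
    Δ_[1] ^[n] (fun x : K => x⁻¹) y =
      (-1) ^ n * n.factorial / (ascPochhammer K (n + 1)).eval y := by
  induction n generalizing y with
  | zero => simp
  | succ n ih =>
    have hy' : ∀ k ≤ n, y + 1 + k ≠ 0 := fun k hk => by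
      simpa [add_assoc, add_comm (1 : K)] using hy (k + 1) (by omega)
    have hA := ascPochhammer_eval_ne_zero (n := n + 1) fun k hk => hy' k (by omega)
    have hB := ascPochhammer_eval_ne_zero (n := n + 1) fun k hk => hy k (by omega)
    have hyA : (ascPochhammer K (n + 2)).eval y = y * (ascPochhammer K (n + 1)).eval (y + 1) := by
      rw [ascPochhammer_succ_left (S := K) (n + 1)]; simp
    have hyB :
        (ascPochhammer K (n + 2)).eval y = (ascPochhammer K (n + 1)).eval y * (y + (n + 1)) := by
      rw [ascPochhammer_succ_eval]; push_cast; ring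
    rw [Function.iterate_succ_apply', fwdDiff, ih hy', ih fun k hk => hy k (by omega),
      Nat.factorial_succ]
    have hy0 : y ≠ 0 := by simpa using hy 0 (by omega)
    have hyn : y + (n + 1) ≠ 0 := by exact_mod_cast hy (n + 1) le_rfl
    have eA : (-1) ^ n * (n.factorial : K) / (ascPochhammer K (n + 1)).eval (y + 1) =
        (-1) ^ n * n.factorial * y / (ascPochhammer K (n + 2)).eval y := by
      rw [hyA]; field_simp
    have eB : (-1) ^ n * (n.factorial : K) / (ascPochhammer K (n + 1)).eval y =
        (-1) ^ n * n.factorial * (y + (n + 1)) / (ascPochhammer K (n + 2)).eval y := by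
      rw [hyB]; field_simp
    rw [eA, eB]
    push_cast
    ring

lemma alternating_sum_choose_div_add (n : ℕ) {y : K} (hy : ∀ k ≤ n, y + k ≠ 0) :
    ∑ k ∈ range (n + 1), (-1) ^ k * (n.choose k : K) / (y + k) =
      n.factorial / (ascPochhammer K (n + 1)).eval y := by
  have h := fwdDiff_iter_inv n hy
  rw [fwdDiff_iter_one_eq_neg_one_pow_mul_sum, mul_div_assoc] at h
  simpa [div_eq_mul_inv] using mul_left_cancel₀ (pow_ne_zero n (neg_ne_zero.2 one_ne_zero)) h

lemma alternating_sum_choose_mul_eval_div_add {n : ℕ} {P : K[X]} (hP : P.degree ≤ n) {y : K}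
    (hy : ∀ k ≤ n, y + k ≠ 0) :
    ∑ k ∈ range (n + 1), (-1) ^ k * (n.choose k : K) * P.eval (k : K) / (y + k) =
      P.eval (-y) * n.factorial / (ascPochhammer K (n + 1)).eval y := by
  set R := P - C (P.eval (-y))
  set Q := R /ₘ (X - C (-y))
  have hRQ : (X - C (-y)) * Q = R := mul_divByMonic_eq_iff_isRoot.2 (by simp [R])
  have hQ : Q.degree < n := by
    rcases eq_or_ne R 0 with hR | hR
    · simp [Q, hR]
    calc Q.degree < R.degree := degree_divByMonic_lt _ _ hR (by simp)
      _ ≤ n := (degree_sub_le _ _).trans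
          (max_le hP (degree_C_le.trans (by exact_mod_cast Nat.zero_le n)))
  have hsplit : ∀ k ∈ range (n + 1), (-1) ^ k * (n.choose k : K) * P.eval (k : K) / (y + k) =
      P.eval (-y) * ((-1) ^ k * n.choose k / (y + k)) + (-1) ^ k * n.choose k * Q.eval (k : K) := by
    intro k hk
    have hPk : P.eval (k : K) = P.eval (-y) + (y + k) * Q.eval (k : K) := by
      have := congrArg (eval (k : K)) hRQ
      simp only [R, eval_mul, eval_sub, eval_X, eval_C] at this
      linear_combination -this
    have := hy k (Nat.lt_succ_iff.mp (mem_range.mp hk))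
    rw [hPk]
    field_simp
  rw [sum_congr rfl hsplit, sum_add_distrib, ← mul_sum, alternating_sum_choose_div_add n hy,
    alternating_sum_choose_mul_eval_eq_zero hQ, add_zero, mul_div_assoc]

end Field

lemma poch_neg_natCast (n k : ℕ) : poch (-(n : ℝ)) k = (-1) ^ k * n.descFactorial k := by
  rw [poch, ascPochhammer_eval_neg_eq_descPochhammer, descPochhammer_eval_eq_descFactorial]

lemma poch_natCast_add_one (a b : ℕ) :
    poch ((a : ℝ) + 1) b = b.factorial * (a + b).choose b := by
  rw [poch, ← Nat.cast_succ, ← Nat.cast_ascFactorial, Nat.ascFactorial_eq_factorial_mul_choose]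
  push_cast
  rfl

lemma poch_neg_natCast_mul_poch_natCast_add_one_div_sq (n m k : ℕ) :
    poch (-(n : ℝ)) k * poch ((m : ℝ) + 1) k / (k.factorial : ℝ) ^ 2 =
      (-1) ^ k * n.choose k * poch ((k : ℝ) + 1) m / m.factorial := by
  rw [poch_neg_natCast, poch_natCast_add_one, poch_natCast_add_one,
    Nat.descFactorial_eq_factorial_mul_choose, add_comm m k, Nat.choose_symm_add]
  field_simp
  push_cast
  ring

lemma neg_one_pow_mul_poch_neg_natCast {n i : ℕ} (hi : i ≤ n) :
    (-1) ^ i * poch (-(n : ℝ)) i = n.factorial / (n - i).factorial := by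
  rw [poch_neg_natCast, ← mul_assoc, ← mul_pow, neg_one_mul, neg_neg, one_pow, one_mul,
    ← Nat.factorial_mul_descFactorial hi]
  field_simp
  push_cast
  ring

theorem stmt_11 (n i s : ℕ) (hi : i ≤ n) :
    ∑ k ∈ Finset.range (n + 1),
      poch (-(n : ℝ)) k * poch ((n : ℝ) - i + 1) k / ((k.factorial : ℝ)) ^ 2
        * (1 / ((k : ℝ) + s + 1))
    = (-1) ^ i * poch (-(n : ℝ)) i * poch (-(s : ℝ)) (n - i) /
        poch ((s : ℝ) + 1) (n + 1) := by
  set m := n - i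
  set P : ℝ[X] := (ascPochhammer ℝ m).comp (X + 1)
  have hP : P.degree ≤ n := by
    refine degree_le_of_natDegree_le ?_
    rw [natDegree_comp, ascPochhammer_natDegree, ← C_1, natDegree_X_add_C, mul_one]
    exact Nat.sub_le n i
  have hy : ∀ k ≤ n, ((s : ℝ) + 1) + k ≠ 0 := fun k _ => by positivity
  have hterm : ∀ k ∈ range (n + 1),
      poch (-(n : ℝ)) k * poch ((n : ℝ) - i + 1) k / ((k.factorial : ℝ)) ^ 2
        * (1 / ((k : ℝ) + s + 1)) =
      (m.factorial : ℝ)⁻¹ *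
        ((-1) ^ k * (n.choose k : ℝ) * P.eval (k : ℝ) / ((s + 1) + k)) := by
    intro k _
    rw [show (n : ℝ) - i + 1 = m + 1 by rw [Nat.cast_sub hi],
      poch_neg_natCast_mul_poch_natCast_add_one_div_sq]
    simp only [P, poch, eval_comp, eval_add, eval_X, eval_one]
    ring
  have hPs : P.eval (-((s : ℝ) + 1)) = poch (-(s : ℝ)) m := by
    simp only [P, poch, eval_comp, eval_add, eval_X, eval_one]
    ring_nf
  rw [sum_congr rfl hterm, ← mul_sum, alternating_sum_choose_mul_eval_div_add hP hy, hPs,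
    neg_one_pow_mul_poch_neg_natCast hi]
  unfold poch
  ring
end
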